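/- For any strategic game H and every ordinal α, property C(α) implies property D(α). -/

import Mathlib

universe u

/-- Transfinite iterations of an operator on a complete lattice:
`F^0 = ⊤`, `F^(α+1) = F (F^α)`, and `F^β = ⨅_{α<β} F^α` for limit `β`. -/
noncomputable def iterate {D : Type u} [CompleteLattice D] (F : D → D) (α : Ordinal.{0}) : D :=
  Ordinal.limitRecOn α ⊤ (fun _ ih => F ih) (fun β _ ih => ⨅ (γ : Ordinal) (h : γ < β), ih γ h)

/-- `R` is a relaxation of `F`. -/
def Relaxation {D : Type u} [CompleteLattice D] (F R : D → D) : Prop :=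
  ∀ α : Ordinal.{0},
    F (iterate R α) ≤ R (iterate R α) ∧
    (F (iterate R α) ≤ iterate R α → R (iterate R α) ≤ iterate R α) ∧
    (R (iterate R α) = iterate R α → F (iterate R α) = iterate R α)

section Games

variable {n : ℕ} {T : Fin n → Type u}

/-- `GR` operator: strategies that are a best response *in the initial game* to
some opponent belief held in `G`. -/
def GR (p : ∀ i : Fin n, (∀ j, T j) → ℝ) (G : ∀ i, Set (T i)) : ∀ i, Set (T i) :=
  fun i => {s : T i | ∃ μ : ∀ j, T j, (∀ j, j ≠ i → μ j ∈ G j) ∧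
    ∀ s' : T i, p i (Function.update μ i s') ≤ p i (Function.update μ i s)}

/-- `LR` operator: strategies that are a best response *in `G`* to
some opponent belief held in `G`. -/
def LR (p : ∀ i : Fin n, (∀ j, T j) → ℝ) (G : ∀ i, Set (T i)) : ∀ i, Set (T i) :=
  fun i => {s : T i | ∃ μ : ∀ j, T j, (∀ j, j ≠ i → μ j ∈ G j) ∧
    ∀ s' ∈ G i, p i (Function.update μ i s') ≤ p i (Function.update μ i s)}

/-- `s'` strictly dominates `s` on the restriction `G`. -/
def Dom (p : ∀ i : Fin n, (∀ j, T j) → ℝ) (G : ∀ i, Set (T i)) (i : Fin n)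
    (s' s : T i) : Prop :=
  ∀ μ : ∀ j, T j, (∀ j, j ≠ i → μ j ∈ G j) →
    p i (Function.update μ i s) < p i (Function.update μ i s')

/-- `GS` operator: strategies not strictly dominated on `G` by any strategy of the initial game. -/
def GS (p : ∀ i : Fin n, (∀ j, T j) → ℝ) (G : ∀ i, Set (T i)) : ∀ i, Set (T i) :=
  fun i => {s : T i | ¬ ∃ s' : T i, Dom p G i s' s}

/-- `LS` operator: strategies not strictly dominated on `G` by any strategy in `G`. -/
def LS (p : ∀ i : Fin n, (∀ j, T j) → ℝ) (G : ∀ i, Set (T i)) : ∀ i, Set (T i) :=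
  fun i => {s : T i | ¬ ∃ s' ∈ G i, Dom p G i s' s}

/-- Property B: to each belief in the initial game a best response (in the initial game) exists. -/
def PropB (p : ∀ i : Fin n, (∀ j, T j) → ℝ) : Prop :=
  ∀ (i : Fin n) (μ : ∀ j, T j), ∃ s : T i, ∀ s' : T i,
    p i (Function.update μ i s') ≤ p i (Function.update μ i s)

/-- Property D(α). -/
def PropD (p : ∀ i : Fin n, (∀ j, T j) → ℝ) (α : Ordinal.{0}) : Prop :=
  ∀ R : (∀ i, Set (T i)) → (∀ i, Set (T i)), Relaxation (fun G => LS p G ⊓ G) R →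
    ∀ (i : Fin n) (s : T i), (∃ s' : T i, Dom p (iterate R α) i s' s) →
      ∃ s' ∈ iterate R α i, Dom p (iterate R α) i s' s

/-- Property C(α). -/
def PropC (p : ∀ i : Fin n, (∀ j, T j) → ℝ) (α : Ordinal.{0}) : Prop :=
  ∀ R : (∀ i, Set (T i)) → (∀ i, Set (T i)), Relaxation (fun G => LS p G ⊓ G) R →
    ∀ (i : Fin n) (s : T i), (∃ s' : T i, Dom p (iterate R α) i s' s) →
      ∃ s'' : T i, Dom p (iterate R α) i s'' s ∧ ¬ ∃ s' : T i, Dom p (iterate R α) i s' s''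

end Games

set_option linter.unusedVariables false

/-! A strategy that no strategy of the initial game dominates on `R^α` survives every earlier
round `R^γ`, `γ ≤ α`: domination on the larger restriction `R^γ ⊇ R^α` would persist on `R^α`,
so the strategy lies in `LS̄(R^γ) ≤ R(R^γ)`. Property C supplies such an undominated dominator,
which is therefore a dominator inside `R^α`. -/

section Iterate

variable {D : Type u} [CompleteLattice D] (F : D → D)

theorem iterate_zero : iterate F 0 = ⊤ :=
  Ordinal.limitRecOn_zero _ _ _

theorem iterate_add_one (γ : Ordinal.{0}) : iterate F (γ + 1) = F (iterate F γ) :=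
  Ordinal.limitRecOn_add_one _ _ _ _

theorem iterate_limit {β : Ordinal.{0}} (hβ : Order.IsSuccLimit β) :
    iterate F β = ⨅ (γ : Ordinal) (_ : γ < β), iterate F γ :=
  Ordinal.limitRecOn_limit _ _ _ _ hβ

variable {F}

theorem iterate_antitone (hF : ∀ γ, F (iterate F γ) ≤ iterate F γ) : Antitone (iterate F) := by
  intro α β hαβ
  induction β using Ordinal.limitRecOn generalizing α with
  | zero => rw [nonpos_iff_eq_zero.mp hαβ]
  | add_one γ ih =>
    rcases hαβ.eq_or_lt with rfl | hlt
    · exact le_rfl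
    · rw [iterate_add_one]
      exact (hF γ).trans (ih (Order.lt_add_one_iff.mp hlt))
  | limit β hβ _ =>
    rcases hαβ.eq_or_lt with rfl | hlt
    · exact le_rfl
    · rw [iterate_limit F hβ]
      exact iInf₂_le α hlt

theorem le_iterate_of_le_map {x : D} {α : Ordinal.{0}}
    (hstep : ∀ γ < α, x ≤ iterate F γ → x ≤ F (iterate F γ)) :
    ∀ β ≤ α, x ≤ iterate F β := by
  intro β
  induction β using Ordinal.limitRecOn with
  | zero => exact fun _ => (iterate_zero F).symm ▸ le_top
  | add_one γ ih =>
    intro hγα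
    have hγ : γ < α := Order.add_one_le_iff.mp hγα
    rw [iterate_add_one]
    exact hstep γ hγ (ih hγ.le)
  | limit β hβ ih =>
    intro hβα
    rw [iterate_limit F hβ]
    exact le_iInf₂ fun γ hγ => ih γ hγ (hγ.le.trans hβα)

theorem Relaxation.map_iterate_le {R : D → D} (hF : ∀ x, F x ≤ x) (hR : Relaxation F R)
    (γ : Ordinal.{0}) : R (iterate R γ) ≤ iterate R γ :=
  (hR γ).2.1 (hF _)

end Iterate

section Games

variable {n : ℕ} {T : Fin n → Type u} (p : ∀ i : Fin n, (∀ j, T j) → ℝ)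

theorem Dom.anti {G H : ∀ i, Set (T i)} (hGH : G ≤ H) {i : Fin n} {s' s : T i}
    (h : Dom p H i s' s) : Dom p G i s' s :=
  fun μ hμ => h μ fun j hj => hGH j (hμ j hj)

theorem GS_mono : Monotone (GS p) :=
  fun _ _ hGH _ _ hs ⟨s', hd⟩ => hs ⟨s', hd.anti p hGH⟩

theorem GS_le_LS (G : ∀ i, Set (T i)) : GS p G ≤ LS p G :=
  fun _ _ hs ⟨s', _, hd⟩ => hs ⟨s', hd⟩

theorem GS_iterate_le_iterate {R : (∀ i, Set (T i)) → (∀ i, Set (T i))}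
    (hR : Relaxation (fun G => LS p G ⊓ G) R) (α : Ordinal.{0}) :
    GS p (iterate R α) ≤ iterate R α := by
  have hanti : Antitone (iterate R) :=
    iterate_antitone (hR.map_iterate_le fun _ => inf_le_right)
  refine le_iterate_of_le_map (fun γ hγ hle => le_trans ?_ (hR γ).1) α le_rfl
  exact le_inf ((GS_mono p (hanti hγ.le)).trans (GS_le_LS p _)) hle

end Games

theorem stmt_14_general {n : ℕ} {T : Fin n → Type u}
    (p : ∀ i : Fin n, (∀ j, T j) → ℝ) (α : Ordinal.{0}) (hC : PropC p α) :
    PropD p α := by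
  intro R hR i s hdom
  obtain ⟨s', hs's, hs'⟩ := hC R hR i s hdom
  exact ⟨s', GS_iterate_le_iterate p hR α i hs', hs's⟩

theorem stmt_14 {n : ℕ} (hn : 2 ≤ n) {T : Fin n → Type u} [∀ i, Nonempty (T i)]
    (p : ∀ i : Fin n, (∀ j, T j) → ℝ) (α : Ordinal.{0}) (hC : PropC p α) :
    PropD p α :=
  stmt_14_general p α hC
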